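/- Let n ≥ 7 and let x = u ∘ a ∘ v, y = u ∘ ā ∘ v be binary sequences of length n with u, a, v alternating, |a| = l. If l = n (i.e., x is alternating and y its complement), then |D_2(x) ∩ D_2(y)| = 2n − 4. -/

import Mathlib

/-- The `t`-deletion ball of a binary sequence `x`: all subsequences of `x`
of length `|x| - t` (i.e., obtained by deleting exactly `t` symbols). -/
def delBall (t : ℕ) (x : List Bool) : Set (List Bool) :=
  {z | z.Sublist x ∧ z.length + t = x.length}

/-- Levenshtein (deletion) distance between binary sequences. -/
noncomputable def levDist (x y : List Bool) : ℕ :=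
  sInf {r | ((delBall r x) ∩ (delBall r y)).Nonempty}

/-- The alternating binary sequence of length `n` starting with `1` (= `true`). -/
def altSeq (n : ℕ) : List Bool :=
  (List.range n).map (fun k => decide (k % 2 = 0))

/-- Bitwise complement of a binary sequence. -/
def compl' (x : List Bool) : List Bool := x.map (fun b => !b)

/-- Elementwise concatenation of sets of sequences. -/
def setConcat (A B : Set (List Bool)) : Set (List Bool) :=
  Set.image2 (· ++ ·) A B

namespace S15

/-- alternating list of length `n` starting with `b` -/
def alt : Bool → ℕ → List Bool
  | _, 0 => []
  | b, n+1 => b :: alt (!b) n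

@[simp] lemma alt_succ (b : Bool) (n : ℕ) : alt b (n+1) = b :: alt (!b) n := rfl

@[simp] lemma alt_length (b : Bool) (n : ℕ) : (alt b n).length = n := by
  induction n generalizing b with
  | zero => rfl
  | succ n ih => simp [ih]

/-- bit at position `j` of `alt b _` -/
def altbit (b : Bool) (j : ℕ) : Bool := b ^^ decide (j % 2 = 1)

@[simp] lemma altbit_zero (b : Bool) : altbit b 0 = b := by simp [altbit]

lemma altbit_succ (b : Bool) (j : ℕ) : altbit b (j+1) = altbit (!b) j := by
  rcases Nat.mod_two_eq_zero_or_one j with h | h <;>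
    simp [altbit, Nat.add_mod, h]

lemma altbit_not (b : Bool) (j : ℕ) : altbit (!b) j = !(altbit b j) := by
  cases b <;> rcases Nat.mod_two_eq_zero_or_one j with h | h <;> simp [altbit, h]

lemma altbit_add (b : Bool) (p q : ℕ) : altbit b (p + q) = altbit (altbit b p) q := by
  rcases Nat.mod_two_eq_zero_or_one p with hp | hp <;>
    rcases Nat.mod_two_eq_zero_or_one q with hq | hq <;>
      cases b <;> simp [altbit, Nat.add_mod, hp, hq]

lemma altbit_inj (b b' : Bool) (j : ℕ) (h : altbit b j = altbit b' j) : b = b' := by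
  cases b <;> cases b' <;>
    rcases Nat.mod_two_eq_zero_or_one j with hj | hj <;> simp_all [altbit, hj]

lemma getElem_alt (b : Bool) (n j : ℕ) (h : j < (alt b n).length) :
    (alt b n)[j] = altbit b j := by
  induction n generalizing b j with
  | zero => simp [alt] at h
  | succ n ih =>
    cases j with
    | zero => simp
    | succ j => simpa [altbit_succ] using ih (!b) j (by simpa using h)

lemma compl'_alt (b : Bool) (n : ℕ) : compl' (alt b n) = alt (!b) n := by
  induction n generalizing b with
  | zero => rfl
  | succ n ih =>
    have h := ih (!b)
    simp only [alt_succ, compl', List.map_cons] at h ⊢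
    rw [h, Bool.not_not]

lemma chain'_eq_alt : ∀ (x : List Bool), List.Chain' (· ≠ ·) x →
    ∀ b, x.head? = some b → x = alt b x.length := by
  intro x
  induction x with
  | nil => simp
  | cons a l ih =>
    intro hc b hb
    simp at hb; subst hb
    rw [List.Chain', List.isChain_cons] at hc
    cases l with
    | nil => rfl
    | cons d t =>
      have h1 : a ≠ d := hc.1 d rfl
      have hd : (!a) = d := by cases a <;> cases d <;> first | rfl | exact absurd rfl h1
      have h2 : d :: t = alt d (t.length + 1) := by simpa using ih hc.2 d rfl
      show a :: d :: t = alt a ((a :: d :: t).length)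
      simp only [List.length_cons, alt_succ, hd]
      rw [alt_succ] at h2
      rw [← h2]

/-- cost of embedding `z` into an alternating sequence starting with `b` -/
def cost : Bool → List Bool → ℕ
  | _, [] => 0
  | b, c :: w => (if c = b then 1 else 2) + cost (!c) w

lemma cost_flip (z : List Bool) (b c : Bool) : cost b z ≤ cost c z + 1 := by
  cases z with
  | nil => simp [cost]
  | cons d w => simp only [cost]; split_ifs <;> omega

lemma sublist_alt_iff : ∀ (n : ℕ) (b : Bool) (z : List Bool),
    z.Sublist (alt b n) ↔ cost b z ≤ n := by
  intro n
  induction n with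
  | zero =>
    intro b z
    constructor
    · intro h
      have : z = [] := List.sublist_nil.mp h
      simp [this, cost]
    · intro h
      cases z with
      | nil => simp
      | cons c w => simp only [cost] at h; split_ifs at h <;> omega
  | succ n ih =>
    intro b z
    constructor
    · intro h
      rw [alt_succ] at h
      cases h with
      | cons _ h =>
        have h1 := (ih (!b) _).mp h
        have h2 := cost_flip z b (!b)
        omega
      | cons_cons _ h =>
        have h1 := (ih (!b) _).mp h
        simp [cost]
        omega
    · intro h
      cases z with
      | nil => simp
      | cons c w =>
        rcases eq_or_ne c b with rfl | hcb
        · simp [cost] at h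
          exact List.Sublist.cons₂ c ((ih (!c) w).mpr (by omega))
        · have hcb' : c = !b := by cases c <;> cases b <;> simp_all
          subst hcb'
          refine List.Sublist.cons b ((ih (!b) ((!b) :: w)).mpr ?_)
          have hf : ((!b) = b) = False := by cases b <;> simp
          simp [cost, hf] at h ⊢
          omega

/-- number of adjacent equal pairs -/
def pairs : List Bool → ℕ
  | [] => 0
  | c :: w => (if w.head? = some c then 1 else 0) + pairs w

@[simp] lemma pairs_nil : pairs [] = 0 := rfl
lemma pairs_cons (c : Bool) (w : List Bool) :
    pairs (c :: w) = (if w.head? = some c then 1 else 0) + pairs w := rfl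

lemma cost_eq : ∀ (w : List Bool) (b c : Bool),
    cost b (c :: w) = (w.length + 1) + (if c = b then 0 else 1) + pairs (c :: w) := by
  intro w
  induction w with
  | nil =>
    intro b c
    simp [cost, pairs]
    split_ifs <;> omega
  | cons d t ih =>
    intro b c
    have h := ih (!c) d
    show (if c = b then 1 else 2) + cost (!c) (d :: t) = _
    rw [h]
    simp only [pairs_cons, List.head?_cons, List.length_cons, Option.some.injEq]
    rcases eq_or_ne d c with rfl | hdc
    · have hf : (d = !d) = False := by cases d <;> simp
      simp [hf]
      split_ifs <;> omega
    · have h1 : (d = c) = False := by simp [hdc]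
      have h2 : (d = !c) = True := by cases c <;> cases d <;> simp_all
      simp [h1, h2]
      split_ifs <;> omega

lemma pairs_alt (b : Bool) (n : ℕ) : pairs (alt b n) = 0 := by
  induction n generalizing b with
  | zero => rfl
  | succ n ih =>
    rw [alt_succ, pairs_cons, ih]
    cases n with
    | zero => simp [alt]
    | succ k => simp [alt]

lemma pairs_append_le (u v : List Bool) : pairs (u ++ v) ≤ pairs u + pairs v + 1 := by
  induction u with
  | nil => simp
  | cons a u' ih =>
    cases u' with
    | nil =>
      simp only [List.singleton_append, pairs_cons, pairs_nil, List.head?_nil]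
      split_ifs <;> omega
    | cons e t =>
      rw [show (a :: e :: t) ++ v = a :: ((e :: t) ++ v) from rfl]
      rw [pairs_cons a ((e :: t) ++ v), pairs_cons a (e :: t)]
      have h1 : ((e :: t) ++ v).head? = some e := rfl
      have h2 : (e :: t).head? = some e := rfl
      rw [h1, h2]
      split_ifs <;> omega

lemma pairs_zero_alt : ∀ (z : List Bool), pairs z = 0 →
    ∀ c, z.head? = some c → z = alt c z.length := by
  intro z
  induction z with
  | nil => simp
  | cons a l ih =>
    intro hp c hc
    simp at hc; subst hc
    cases l with
    | nil => rfl
    | cons d t =>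
      rw [pairs_cons] at hp
      have hd : d ≠ a := by
        intro h; subst h; simp at hp
      have hp' : pairs (d :: t) = 0 := by split_ifs at hp <;> omega
      have h2 := ih hp' d rfl
      have hda : d = !a := by cases a <;> cases d <;> first | rfl | exact absurd rfl hd
      show a :: d :: t = alt a ((a :: d :: t).length)
      simp only [List.length_cons, alt_succ, ← hda]
      simp only [List.length_cons] at h2
      rw [alt_succ] at h2
      rw [← h2]

/-- the canonical member: alternates with start `c` for `i` steps, then the
bit is repeated and it alternates to the end (for `i = 0` it is the
alternating word starting with `!c`). -/
def G (c : Bool) (i m : ℕ) : List Bool := alt c i ++ alt (!(altbit c i)) (m - i)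

lemma G_zero (c : Bool) (m : ℕ) : G c 0 m = alt (!c) m := by
  simp [G, alt]

lemma G_succ (c : Bool) (i m : ℕ) : G c (i+1) (m+1) = c :: G (!c) i m := by
  simp only [G, alt_succ, altbit_succ, Nat.succ_sub_succ, List.cons_append]

lemma length_G (c : Bool) (i m : ℕ) (h : i ≤ m) : (G c i m).length = m := by
  simp [G]; omega

lemma pairs_G (c : Bool) (i m : ℕ) : pairs (G c i m) ≤ 1 := by
  have := pairs_append_le (alt c i) (alt (!(altbit c i)) (m - i))
  rw [pairs_alt, pairs_alt] at this
  exact this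

lemma key : ∀ z : List Bool, z ≠ [] → pairs z ≤ 1 →
    ∃ c i, i < z.length ∧ z = G c i z.length := by
  intro z
  induction z with
  | nil => simp
  | cons a w ih =>
    intro _ hp
    cases w with
    | nil =>
      refine ⟨!a, 0, by simp, ?_⟩
      rw [G_zero, Bool.not_not]
      rfl
    | cons d t =>
      rcases eq_or_ne d a with rfl | hda
      · -- double letter at the front
        have h0 : pairs (d :: t) = 0 := by
          have hh : pairs (d :: d :: t) = 1 + pairs (d :: t) := by
            rw [pairs_cons]; simp
          omega
        have h2 : d :: t = alt d (t.length + 1) := by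
          simpa using pairs_zero_alt (d :: t) h0 d rfl
        refine ⟨d, 1, by simp, ?_⟩
        show d :: d :: t = G d 1 (t.length + 1 + 1)
        rw [G_succ, G_zero, Bool.not_not, ← h2]
      · have hp' : pairs (d :: t) ≤ 1 := by
          rw [pairs_cons] at hp
          split_ifs at hp <;> omega
        obtain ⟨c, i, hi, hw⟩ := ih (by simp) hp'
        have hda' : d = !a := by cases a <;> cases d <;> first | rfl | exact absurd rfl hda
        cases i with
        | zero =>
          -- the tail is alternating starting with d = !a, so the whole is alternating
          rw [G_zero] at hw
          simp only [List.length_cons] at hw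
          have hcd : (!c) = d := by
            have h' := congrArg List.head? hw
            rw [alt_succ] at h'
            simp only [List.head?_cons, Option.some.injEq] at h'
            exact h'.symm
          refine ⟨!a, 0, by simp, ?_⟩
          rw [G_zero, Bool.not_not]
          show a :: d :: t = alt a ((a :: d :: t).length)
          have h3 : alt a ((a :: d :: t).length) = a :: alt (!a) (t.length + 1) := by
            simp [alt_succ]
          have h4 : alt (!a) (t.length + 1) = d :: t := by
            rw [show (!a) = (!c) from by rw [hcd, hda']]
            exact hw.symm
          rw [h3, h4]
        | succ i' =>
          -- the defect is inside the tail
          have hc : c = d := by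
            have := congrArg List.head? hw
            simp only [List.length_cons] at this
            rw [G_succ] at this
            simp only [List.head?_cons, Option.some.injEq] at this
            exact this.symm
          subst hc
          refine ⟨a, i' + 2, ?_, ?_⟩
          · simp only [List.length_cons] at hi ⊢; omega
          · show a :: c :: t = G a (i' + 1 + 1) (t.length + 1 + 1)
            rw [G_succ]
            simp only [List.length_cons] at hw
            rw [← hda', ← hw]

lemma getElem_G (c : Bool) (i m j : ℕ) (him : i ≤ m) (hj : j < m)
    (h : j < (G c i m).length) :
    (G c i m)[j] = if j < i then altbit c j else !(altbit c j) := by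
  unfold G at h ⊢
  by_cases hji : j < i
  · rw [List.getElem_append_left (by simpa using hji)]
    rw [getElem_alt]
    simp [hji]
  · rw [List.getElem_append_right (by simpa using Nat.le_of_not_lt hji)]
    rw [getElem_alt]
    simp only [alt_length]
    rw [altbit_not, ← altbit_add]
    rw [Nat.add_sub_cancel' (Nat.le_of_not_lt hji)]
    simp [hji]

lemma G_inj {m : ℕ} {c c' : Bool} {i i' : ℕ} (hi : i < m) (hi' : i' < m)
    (h : G c i m = G c' i' m) : c = c' ∧ i = i' := by
  have hpt : ∀ j, j < m →
      (if j < i then altbit c j else !(altbit c j)) =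
      (if j < i' then altbit c' j else !(altbit c' j)) := by
    intro j hj
    have h1 : j < (G c i m).length := by rw [length_G c i m (le_of_lt hi)]; exact hj
    have h2 : j < (G c' i' m).length := by rw [length_G c' i' m (le_of_lt hi')]; exact hj
    rw [← getElem_G c i m j (le_of_lt hi) hj h1, ← getElem_G c' i' m j (le_of_lt hi') hj h2]
    exact List.getElem_of_eq h h1
  have hcc : c = c' := by
    have := hpt (m - 1) (by omega)
    rw [if_neg (by omega), if_neg (by omega)] at this
    exact altbit_inj _ _ _ (Bool.not_inj this)
  subst hcc
  refine ⟨rfl, ?_⟩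
  rcases lt_trichotomy i i' with hlt | heq | hgt
  · have := hpt i (lt_trans hlt hi')
    rw [if_neg (by omega), if_pos hlt] at this
    exact absurd this.symm (by cases altbit c i <;> simp)
  · exact heq
  · have := hpt i' (lt_trans hgt hi)
    rw [if_pos hgt, if_neg (by omega)] at this
    exact absurd this (by cases altbit c i' <;> simp)

end S15

open S15 in
/-- If `x` is an alternating sequence of length `n ≥ 7` and `y` is its bitwise
complement, then the two-deletion balls of `x` and `y` intersect in exactly
`2n - 4` sequences. -/
theorem stmt15 (n : ℕ) (x : List Bool) (hn : 7 ≤ n) (hx : x.length = n)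
    (halt : List.Chain' (· ≠ ·) x) :
    (delBall 2 x ∩ delBall 2 (compl' x)).ncard = 2 * n - 4 := by
  have hxne : x ≠ [] := by intro h; rw [h] at hx; simp at hx; omega
  obtain ⟨b, hb⟩ : ∃ b, x.head? = some b := ⟨x.head hxne, List.head?_eq_head hxne⟩
  have hxa : x = alt b n := by rw [← hx]; exact chain'_eq_alt x halt b hb
  have hya : compl' x = alt (!b) n := by rw [hxa, compl'_alt]
  -- membership characterization
  have hmem : ∀ z : List Bool, z ∈ delBall 2 x ∩ delBall 2 (compl' x) ↔
      (z.length = n - 2 ∧ pairs z ≤ 1) := by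
    intro z
    have hyl : (compl' x).length = n := by rw [hya, alt_length]
    constructor
    · rintro ⟨⟨hs1, hl1⟩, ⟨hs2, _⟩⟩
      rw [hx] at hl1
      rw [hxa] at hs1
      rw [hya] at hs2
      have hc1 := (sublist_alt_iff n b z).mp hs1
      have hc2 := (sublist_alt_iff n (!b) z).mp hs2
      refine ⟨by omega, ?_⟩
      cases z with
      | nil => simp
      | cons c w =>
        rw [cost_eq] at hc1 hc2
        simp only [List.length_cons] at hc1 hc2 hl1
        rcases eq_or_ne c b with rfl | hcb
        · have hf : (c = !c) = False := by cases c <;> simp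
          simp only [hf, if_false] at hc2
          omega
        · rw [if_neg hcb] at hc1
          omega
    · rintro ⟨hl, hp⟩
      have hzlen : z.length + 2 = n := by omega
      have hbound : ∀ e : Bool, cost e z ≤ n := by
        intro e
        cases z with
        | nil => simp [cost]
        | cons c w =>
          rw [cost_eq]
          simp only [List.length_cons] at hl
          split_ifs <;> omega
      constructor
      · exact ⟨by rw [hxa]; exact (sublist_alt_iff n b z).mpr (hbound b), by omega⟩
      · exact ⟨by rw [hya]; exact (sublist_alt_iff n (!b) z).mpr (hbound (!b)),
          by rw [hyl]; omega⟩
  -- the set is the range of an injective function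
  have hset : delBall 2 x ∩ delBall 2 (compl' x) =
      Set.range (fun p : Bool × Fin (n - 2) => G p.1 p.2.1 (n - 2)) := by
    ext z
    rw [hmem z]
    constructor
    · rintro ⟨hl, hp⟩
      have hzne : z ≠ [] := by
        intro h; rw [h] at hl; simp at hl; omega
      obtain ⟨c, i, hi, hG⟩ := key z hzne hp
      refine ⟨(c, ⟨i, by rw [hl] at hi; exact hi⟩), ?_⟩
      simp only
      rw [← hl, ← hG]
    · rintro ⟨⟨c, i⟩, rfl⟩
      simp only
      have him : i.1 ≤ n - 2 := le_of_lt i.2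
      exact ⟨length_G c i.1 (n - 2) him, pairs_G c i.1 (n - 2)⟩
  rw [hset, ← Set.image_univ, Set.ncard_image_of_injective _ ?_, Set.ncard_univ]
  · rw [Nat.card_prod]
    simp only [Nat.card_eq_fintype_card, Fintype.card_bool, Fintype.card_fin]
    omega
  · rintro ⟨c, i⟩ ⟨c', i'⟩ hpq
    simp only at hpq
    obtain ⟨hc, hi⟩ := G_inj i.2 i'.2 hpq
    simp [hc, Fin.ext_iff, hi]
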